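/- If three traces of the trace graph of a knot K ⊂ ℝ³ − L with lk(K,L) = m, marked by [a], [b], [c] ∈ ℤ_{|m|}, meet at a triple vertex (corresponding to a fiber trisecant of K), and [b] is the marking of the middle trace, then b = a + c (mod |m|). -/

import Mathlib

/-!
Common setup, following T. Fiedler and V. Kurlin,
"Fiber quadrisecants in knot isotopies" (arXiv:math/0701878).

We fix the axis `L` to be the x-axis of `ℝ³ = ℝ × ℝ × ℝ` and consider the
fibration `φ : ℝ³ − L → S¹` whose fibers are the open half-planes attached
to `L`.  Knots are smooth embeddings `S¹ → ℝ³ − L` (modelled by 1-periodic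
regular smooth maps `ℝ → ℝ³` avoiding `L` and injective on a period).

For an ordered pair `(p,q)` of points of a knot `K` lying in a common fiber,
`τ(p,q)` is the angle between `L` and the oriented secant through `p` then `q`
(measured inside the plane containing the fiber, using the coordinates
`(λ, ρ)` = (position along the axis, distance from the axis)), and `ρ(p,q)`
is the distance from that secant line to the origin `0 ∈ L`.  The trace graph
`TG(K)` is the set of points `(τ(p,q), φ, ρ(p,q))` in the thickened torus
`𝕋 = S¹_τ × S¹_φ × ℝ⁺_ρ`.

A crossing of the projection `pr_{τφ}(TG(K))` is a pair of fiber secants of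
`K` lying in a common fiber, parallel to each other and at different
distances from the axis; the branch further from the axis is taken as the
overcrossing branch.  The homological marking of an ordered secant pair
`(p,q)` is the winding number around `L` of the loop which follows `K` from
the undercrossing point `p` to the overcrossing point `q` and returns along
the secant segment (which lies in a single fiber and hence does not wind).
The sign of a crossing of the trace-graph diagram is computed from the signs
of the two underlying knot-diagram crossings and the slopes `dτ/dφ` of the
two branches, according to the orientation rule of Definition 2.2 of the
paper (τ increases along a branch iff the underlying crossing sign is `+1`).

Combinatorial trace-graph diagrams (crossings with signs, markings of the
overcrossing and undercrossing traces, and the `τ ↦ τ + π` symmetry) are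
modelled by `TGDiagram`, on which the three writhes of Definition 1.3 and
the moves of Fig. 4 and Fig. 6 are defined.
-/

noncomputable section
open Real Set

namespace FQS

/-- Points of `ℝ³`, written as `(x, y, z)`. -/
abbrev Pt : Type := ℝ × ℝ × ℝ

def xc (p : Pt) : ℝ := p.1
def yc (p : Pt) : ℝ := p.2.1
def zc (p : Pt) : ℝ := p.2.2

/-- The fixed axis `L`: the x-axis of `ℝ³`. -/
def axisL : Set Pt := {p | yc p = 0 ∧ zc p = 0}

/-- Distance from the axis `L`. -/
def rho (p : Pt) : ℝ := Real.sqrt (yc p ^ 2 + zc p ^ 2)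

/-- Position along the axis `L`. -/
def lam (p : Pt) : ℝ := xc p

/-- The fibration `φ : ℝ³ − L → S¹` by half-planes attached to `L`. -/
def phiAngle (p : Pt) : AddCircle (2 * π) :=
  ((Complex.arg ((yc p : ℂ) + (zc p : ℂ) * Complex.I) : ℝ) : AddCircle (2 * π))

/-- `p` and `q` lie in a common fiber (open half-plane bounded by `L`) of `φ`. -/
def SameFiber (p q : Pt) : Prop :=
  p ∉ axisL ∧ q ∉ axisL ∧ yc p * zc q - zc p * yc q = 0 ∧ 0 < yc p * yc q + zc p * zc q

def cross2 (u v : ℝ × ℝ) : ℝ := u.1 * v.2 - u.2 * v.1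
def dot2 (u v : ℝ × ℝ) : ℝ := u.1 * v.1 + u.2 * v.2
def vsub3 (q p : Pt) : Pt := (q.1 - p.1, q.2.1 - p.2.1, q.2.2 - p.2.2)
def cross3 (u v : Pt) : Pt :=
  (yc u * zc v - zc u * yc v, zc u * xc v - xc u * zc v, xc u * yc v - yc u * xc v)
def dot3 (u v : Pt) : ℝ := xc u * xc v + yc u * yc v + zc u * zc v
def det3 (u v w : Pt) : ℝ := dot3 u (cross3 v w)

/-- The sign of a real number, as an integer. -/
def sgn (x : ℝ) : ℤ := if 0 < x then 1 else if x < 0 then -1 else 0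

/-- The straight line through two (distinct) points. -/
def lineThrough (p q : Pt) : Set Pt := {r | ∃ s : ℝ, r = p + s • (q - p)}

/-- Angular speed of `g` around the axis `L` (up to the positive factor `ρ²`):
`g` is tangent to a fiber at `t` iff `rawDang g t = 0`. -/
def rawDang (g : ℝ → Pt) (t : ℝ) : ℝ :=
  yc (g t) * deriv (fun s => zc (g s)) t - zc (g t) * deriv (fun s => yc (g s)) t

/-- A knot in `ℝ³ − L`: a 1-periodic smooth regular embedding avoiding the axis. -/
def IsKnotMap (g : ℝ → Pt) : Prop :=
  ContDiff ℝ (⊤ : ℕ∞) g ∧ (∀ t, g (t + 1) = g t) ∧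
    Set.InjOn g (Set.Ico (0 : ℝ) 1) ∧ (∀ t, deriv g t ≠ 0) ∧ ∀ t, g t ∉ axisL

structure Knot : Type where
  map : ℝ → Pt
  isKnot : IsKnotMap map

namespace Knot

variable (K : Knot)

def onK (p : Pt) : Prop := p ∈ Set.range K.map

def x (t : ℝ) : ℝ := xc (K.map t)
def r (t : ℝ) : ℝ := rho (K.map t)

/-- Angular speed of `K` around `L`; `K` is tangent to a fiber at `t` iff `K.Dang t = 0`. -/
def Dang (t : ℝ) : ℝ := rawDang K.map t

/-- Winding number (as a real number) of `K|_{[a,b]}` around the axis `L`. -/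
def wind (a b : ℝ) : ℝ := (1 / (2 * π)) * ∫ t in a..b, K.Dang t / (K.r t) ^ 2

/-- The linking number `lk(K, L)` of the knot with the axis. -/
def lkL : ℤ := round (K.wind 0 1)

/-- A parameter in `[0,1)` realizing a point of the knot (junk value `0` otherwise). -/
def param (p : Pt) : ℝ :=
  @dite _ (∃ t ∈ Set.Ico (0 : ℝ) 1, K.map t = p) (Classical.dec _)
    (fun h => h.choose) (fun _ => 0)

/-- Parameters `(a, b)` with `b ∈ [a, a + 1)` representing the ordered pair `(p, q)`. -/
def param2 (p q : Pt) : ℝ × ℝ :=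
  (K.param p, if K.param q < K.param p then K.param q + 1 else K.param q)

/-- Integer homological marking of the ordered secant pair `(p,q)`: the winding number
around `L` of the loop following `K` from the undercrossing point `p` to the
overcrossing point `q` and closed up by the secant segment inside the fiber. -/
def markInt (p q : Pt) : ℤ := round (K.wind (K.param2 p q).1 (K.param2 p q).2)

/-- Homological marking in `ℤ_{|m|}`. -/
def mark (m : ℕ) (p q : Pt) : ZMod m := (K.markInt p q : ZMod m)

end Knot

/-- The secant vector of the ordered pair `(p,q)` in the fiber-plane coordinates `(λ, ρ)`. -/
def secVec (p q : Pt) : ℝ × ℝ := (lam q - lam p, rho q - rho p)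

/-- The angle `τ(p,q) ∈ S¹` between the axis `L` and the oriented secant through `p` then `q`. -/
def tauAngle (p q : Pt) : AddCircle (2 * π) :=
  ((Complex.arg (((lam q - lam p : ℝ) : ℂ) + ((rho q - rho p : ℝ) : ℂ) * Complex.I) : ℝ) :
    AddCircle (2 * π))

/-- The distance `ρ(p,q)` from the secant line through `p, q` to the origin `0 ∈ L`. -/
def rhoLine (p q : Pt) : ℝ :=
  |lam p * rho q - lam q * rho p| /
    Real.sqrt ((lam q - lam p) ^ 2 + (rho q - rho p) ^ 2)

/-- The thickened torus `𝕋 = S¹_τ × S¹_φ × ℝ_ρ`. -/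
abbrev Torus3 : Type := AddCircle (2 * π) × AddCircle (2 * π) × ℝ

/-- The point of `𝕋` associated to an ordered secant pair `(p,q)`. -/
def TGpt (p q : Pt) : Torus3 := (tauAngle p q, phiAngle p, rhoLine p q)

/-- The trace graph `TG(K) ⊂ 𝕋`. -/
def TG (K : Knot) : Set Torus3 :=
  {x | ∃ p q : Pt, K.onK p ∧ K.onK q ∧ p ≠ q ∧ SameFiber p q ∧ x = TGpt p q}

namespace Knot

variable (K : Knot)

/-- Determinant whose vanishing detects tangencies of the projection of `K`
along the secant through `p` then `q`. -/
def crossDet (p q : Pt) : ℝ :=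
  det3 (vsub3 q p) (deriv K.map (K.param2 p q).2) (deriv K.map (K.param2 p q).1)

/-- The sign of the knot-diagram crossing given by the ordered pair `(p,q)`
(`q` overcrosses `p`) in the projection of `K` along the secant. -/
def crossSign (p q : Pt) : ℤ := sgn (K.crossDet p q)

/-- The slope `dτ/dφ` of the branch of the trace graph through the point
corresponding to the ordered secant pair `(p,q)` (up to a positive factor). -/
def tauSlope (p q : Pt) : ℝ :=
  ((lam q - lam p) *
      (deriv K.r (K.param2 p q).2 / (K.Dang (K.param2 p q).2 / (K.r (K.param2 p q).2) ^ 2) -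
        deriv K.r (K.param2 p q).1 / (K.Dang (K.param2 p q).1 / (K.r (K.param2 p q).1) ^ 2)) -
    (rho q - rho p) *
      (deriv K.x (K.param2 p q).2 / (K.Dang (K.param2 p q).2 / (K.r (K.param2 p q).2) ^ 2) -
        deriv K.x (K.param2 p q).1 / (K.Dang (K.param2 p q).1 / (K.r (K.param2 p q).1) ^ 2))) /
    ((lam q - lam p) ^ 2 + (rho q - rho p) ^ 2)

/-- Crossings of the projection `pr_{τφ}(TG(K))`: two parallel fiber secants
`(p₁,q₁)` and `(p₂,q₂)` lying in a common fiber, the first one (the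
overcrossing branch) further from the axis. -/
def CrossingSet : Set (Pt × Pt × Pt × Pt) :=
  {c | K.onK c.1 ∧ K.onK c.2.1 ∧ K.onK c.2.2.1 ∧ K.onK c.2.2.2 ∧
    c.1 ≠ c.2.1 ∧ c.2.2.1 ≠ c.2.2.2 ∧
    SameFiber c.1 c.2.1 ∧ SameFiber c.2.2.1 c.2.2.2 ∧ SameFiber c.1 c.2.2.1 ∧
    cross2 (secVec c.1 c.2.1) (secVec c.2.2.1 c.2.2.2) = 0 ∧
    0 < dot2 (secVec c.1 c.2.1) (secVec c.2.2.1 c.2.2.2) ∧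
    rhoLine c.2.2.1 c.2.2.2 < rhoLine c.1 c.2.1}

/-- The sign of a crossing of the trace-graph diagram `pr_{τφ}(TG(K))`, computed from
the oriented tangent directions of the two branches (Definition 2.2 orientation rule). -/
def crSign (c : Pt × Pt × Pt × Pt) : ℤ :=
  K.crossSign c.1 c.2.1 * K.crossSign c.2.2.1 c.2.2.2 *
    sgn (K.tauSlope c.1 c.2.1) * sgn (K.tauSlope c.2.2.1 c.2.2.2) *
    sgn (K.tauSlope c.1 c.2.1 - K.tauSlope c.2.2.1 c.2.2.2)

/-- An ordered fiber secant pair of `K`. -/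
def SecPair (pq : Pt × Pt) : Prop :=
  K.onK pq.1 ∧ K.onK pq.2 ∧ pq.1 ≠ pq.2 ∧ SameFiber pq.1 pq.2

/-- `p` is a point where `K` is tangent to a fiber of `φ`. -/
def IsFiberTangentPt (p : Pt) : Prop := ∃ t, K.map t = p ∧ K.Dang t = 0

def detPair (pq : Pt × Pt) : ℝ := K.crossDet pq.1 pq.2

end Knot

def secVecPair (pq : Pt × Pt) : ℝ × ℝ := secVec pq.1 pq.2

/-- Triple vertices of `TG(K)`: points of `𝕋` arising from fiber trisecants. -/
def TripleVertices (K : Knot) : Set Torus3 :=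
  {x | ∃ p₁ p₂ p₃ : Pt, K.onK p₁ ∧ K.onK p₂ ∧ K.onK p₃ ∧
    p₁ ≠ p₂ ∧ p₂ ≠ p₃ ∧ p₁ ≠ p₃ ∧ SameFiber p₁ p₂ ∧ SameFiber p₂ p₃ ∧
    (∃ s : ℝ, 0 < s ∧ s < 1 ∧ p₂ = p₁ + s • (p₃ - p₁)) ∧
    (x = TGpt p₁ p₂ ∨ x = TGpt p₂ p₃ ∨ x = TGpt p₁ p₃)}

namespace Knot

variable (K : Knot)

/-! The codimension-1 singularities of Definition 2.1. -/

/-- A fiber quadrisecant: a line meeting `K` transversally in 4 points of one fiber. -/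
def HasFiberQuadrisecant : Prop :=
  ∃ t₁ t₂ t₃ t₄ : ℝ,
    K.map t₁ ≠ K.map t₂ ∧ K.map t₁ ≠ K.map t₃ ∧ K.map t₁ ≠ K.map t₄ ∧
    K.map t₂ ≠ K.map t₃ ∧ K.map t₂ ≠ K.map t₄ ∧ K.map t₃ ≠ K.map t₄ ∧
    Collinear ℝ ({K.map t₁, K.map t₂, K.map t₃, K.map t₄} : Set Pt) ∧
    SameFiber (K.map t₁) (K.map t₂) ∧ SameFiber (K.map t₁) (K.map t₃) ∧
    SameFiber (K.map t₁) (K.map t₄) ∧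
    ∀ t ∈ ({t₁, t₂, t₃, t₄} : Set ℝ),
      cross3 (vsub3 (K.map t₂) (K.map t₁)) (deriv K.map t) ≠ 0

/-- A fiber trisecant through the three points `K.map t₁, K.map t₂, K.map t₃`. -/
def IsFiberTrisecant (t₁ t₂ t₃ : ℝ) : Prop :=
  K.map t₁ ≠ K.map t₂ ∧ K.map t₁ ≠ K.map t₃ ∧ K.map t₂ ≠ K.map t₃ ∧
    Collinear ℝ ({K.map t₁, K.map t₂, K.map t₃} : Set Pt) ∧
    SameFiber (K.map t₁) (K.map t₂) ∧ SameFiber (K.map t₁) (K.map t₃)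

/-- Singularity: a fiber trisecant lying in the plane spanned by the tangents of `K`
at two of its three points. -/
def HasDegenerateTrisecant : Prop :=
  ∃ t₁ t₂ t₃, K.IsFiberTrisecant t₁ t₂ t₃ ∧
    ∃ s ∈ ({t₁, t₂, t₃} : Set ℝ), ∃ s' ∈ ({t₁, t₂, t₃} : Set ℝ), K.map s ≠ K.map s' ∧
      det3 (vsub3 (K.map t₂) (K.map t₁)) (deriv K.map s) (deriv K.map s') = 0

/-- Singularity: a fiber secant tangent to `K` at one of its two points. -/
def HasTangentSecant : Prop :=
  ∃ t₁ t₂, K.map t₁ ≠ K.map t₂ ∧ SameFiber (K.map t₁) (K.map t₂) ∧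
    cross3 (vsub3 (K.map t₂) (K.map t₁)) (deriv K.map t₁) = 0

/-- Singularity: a fiber secant `(p,q)` such that `K` has a tangency of order 2 at `p`
with the plane spanned by the secant and the tangent of `K` at `q`. -/
def HasCubicSecant : Prop :=
  ∃ t₁ t₂, K.map t₁ ≠ K.map t₂ ∧ SameFiber (K.map t₁) (K.map t₂) ∧
    cross3 (vsub3 (K.map t₂) (K.map t₁)) (deriv K.map t₂) ≠ 0 ∧
    dot3 (cross3 (vsub3 (K.map t₂) (K.map t₁)) (deriv K.map t₂)) (deriv K.map t₁) = 0 ∧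
    dot3 (cross3 (vsub3 (K.map t₂) (K.map t₁)) (deriv K.map t₂))
      (deriv (deriv K.map) t₁) = 0

/-- Singularity: a fiber tangent having a tangency of order 2 with `K`
(degenerate cusp). -/
def HasDegenerateFiberTangent : Prop :=
  ∃ t, K.Dang t = 0 ∧ cross3 (deriv K.map t) (deriv (deriv K.map) t) = 0

/-- Singularity: a fiber trisecant one of whose points is a fiber tangency point of `K`. -/
def HasTangentTrisecant : Prop :=
  ∃ t₁ t₂ t₃, K.IsFiberTrisecant t₁ t₂ t₃ ∧ (K.Dang t₁ = 0 ∨ K.Dang t₂ = 0 ∨ K.Dang t₃ = 0)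

/-- Singularity: a point where `K` has a tangency of order 2 with a fiber. -/
def HasFiberInflection : Prop := ∃ t, K.Dang t = 0 ∧ deriv K.Dang t = 0

/-- Singularity: a fiber extreme secant, i.e. a fiber secant meeting `K` in two points
at which `K` is tangent to the fiber. -/
def HasFiberExtremeSecant : Prop :=
  ∃ t₁ t₂, K.map t₁ ≠ K.map t₂ ∧ SameFiber (K.map t₁) (K.map t₂) ∧
    K.Dang t₁ = 0 ∧ K.Dang t₂ = 0

/-- A generic knot: none of the codimension-1 singularities of Definition 2.1 occurs. -/
def IsGeneric : Prop :=
  ¬K.HasFiberQuadrisecant ∧ ¬K.HasDegenerateTrisecant ∧ ¬K.HasTangentSecant ∧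
    ¬K.HasCubicSecant ∧ ¬K.HasDegenerateFiberTangent ∧ ¬K.HasTangentTrisecant ∧
    ¬K.HasFiberInflection ∧ ¬K.HasFiberExtremeSecant

end Knot

/-- `l` is a fiber quadrisecant line of the (1-periodic) curve `g`. -/
def IsFiberQuadrisecantLine (g : ℝ → Pt) (l : Set Pt) : Prop :=
  ∃ t₁ t₂ t₃ t₄ : ℝ,
    g t₁ ≠ g t₂ ∧ g t₁ ≠ g t₃ ∧ g t₁ ≠ g t₄ ∧ g t₂ ≠ g t₃ ∧ g t₂ ≠ g t₄ ∧ g t₃ ≠ g t₄ ∧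
    l = lineThrough (g t₁) (g t₂) ∧ g t₃ ∈ l ∧ g t₄ ∈ l ∧
    SameFiber (g t₁) (g t₂) ∧ SameFiber (g t₁) (g t₃) ∧ SameFiber (g t₁) (g t₄) ∧
    ∀ t ∈ ({t₁, t₂, t₃, t₄} : Set ℝ), cross3 (vsub3 (g t₂) (g t₁)) (deriv g t) ≠ 0

/-- `l` is a fiber extreme secant line of `g`: a fiber secant meeting the curve in two
points at which the curve has tangencies of order 1 with the fiber. -/
def IsFiberExtremeSecantLine (g : ℝ → Pt) (l : Set Pt) : Prop :=
  ∃ t₁ t₂ : ℝ, g t₁ ≠ g t₂ ∧ l = lineThrough (g t₁) (g t₂) ∧ SameFiber (g t₁) (g t₂) ∧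
    rawDang g t₁ = 0 ∧ rawDang g t₂ = 0 ∧
    deriv (rawDang g) t₁ ≠ 0 ∧ deriv (rawDang g) t₂ ≠ 0

/-- A smooth isotopy of knots in `ℝ³ − L`. -/
structure Isotopy (K₀ K₁ : Knot) : Type where
  F : ℝ → ℝ → Pt
  smooth : ContDiff ℝ (⊤ : ℕ∞) fun st : ℝ × ℝ => F st.1 st.2
  slice : ∀ s ∈ Set.Icc (0 : ℝ) 1, IsKnotMap (F s)
  init : F 0 = K₀.map
  finl : F 1 = K₁.map

/-- The fiber quadrisecant events occurring during an isotopy. -/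
def quadEvents {K₀ K₁ : Knot} (I : Isotopy K₀ K₁) : Set (ℝ × Set Pt) :=
  {e | e.1 ∈ Set.Icc (0 : ℝ) 1 ∧ IsFiberQuadrisecantLine (I.F e.1) e.2}

/-- The fiber extreme secant events occurring during an isotopy. -/
def extremeEvents {K₀ K₁ : Knot} (I : Isotopy K₀ K₁) : Set (ℝ × Set Pt) :=
  {e | e.1 ∈ Set.Icc (0 : ℝ) 1 ∧ IsFiberExtremeSecantLine (I.F e.1) e.2}

/-- `fqs(K₀,K₁)`: the minimum number of fiber quadrisecants occurring during
all isotopies connecting `K₀` to `K₁`. -/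
def fqs (K₀ K₁ : Knot) : ℕ∞ := ⨅ I : Isotopy K₀ K₁, (quadEvents I).encard

/-- `fes(K₀,K₁)`: the minimum number of fiber extreme secants occurring during
all isotopies connecting `K₀` to `K₁`. -/
def fes (K₀ K₁ : Knot) : ℕ∞ := ⨅ I : Isotopy K₀ K₁, (extremeEvents I).encard

/-- An isotopy through closed braids: every time slice is transversal to the fibers. -/
structure BraidIsotopy (K₀ K₁ : Knot) extends Isotopy K₀ K₁ : Type where
  braid : ∀ s ∈ Set.Icc (0 : ℝ) 1, ∀ t, 0 < rawDang (toIsotopy.F s) t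

/-- The minimum number of fiber quadrisecants over isotopies through closed braids. -/
def fqsBraid (K₀ K₁ : Knot) : ℕ∞ :=
  ⨅ I : BraidIsotopy K₀ K₁, (quadEvents I.toIsotopy).encard

/-! ### Combinatorial trace-graph diagrams -/

/-- A combinatorial trace-graph diagram: the crossings of `pr_{τφ}(TG(K))`,
with their signs, the homological markings in `ℤ_{|m|}` of the overcrossing and
undercrossing traces, and the `τ ↦ τ + π` symmetry on crossings. -/
structure TGDiagram (m : ℕ) : Type 1 where
  Crossing : Type
  sign : Crossing → ℤ
  over' : Crossing → ZMod m
  under : Crossing → ZMod m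
  symm : Crossing → Crossing

namespace TGDiagram

variable {m : ℕ}

/-- The unordered writhe `W^u_{a,b}`: the sum of signs over all crossings of the
trace marked `[a]` with the trace marked `[b]`. -/
def Wu (D : TGDiagram m) (a b : ZMod m) : ℤ :=
  ∑ᶠ c ∈ {c : D.Crossing |
    (D.over' c = a ∧ D.under c = b) ∨ (D.over' c = b ∧ D.under c = a)}, D.sign c

/-- The ordered writhe `W^o_{a,b}`: the sum of signs over all crossings where the
trace marked `[a]` overcrosses the trace marked `[b]`. -/
def Wo (D : TGDiagram m) (a b : ZMod m) : ℤ :=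
  ∑ᶠ c ∈ {c : D.Crossing | D.over' c = a ∧ D.under c = b}, D.sign c

/-- The coordinated writhe `W^c_{a,a}`: the sum of signs over all self-crossings of
the trace marked `[a]`. -/
def Wc (D : TGDiagram m) (a : ZMod m) : ℤ :=
  ∑ᶠ c ∈ {c : D.Crossing | D.over' c = a ∧ D.under c = a}, D.sign c

/-- A proper trace-graph diagram: finitely many crossings, all signs `±1`, and the
fixed-point free `τ ↦ τ + π` symmetry, which preserves signs and replaces a
marking `[a]` by `[|m| − a] = −[a]`. -/
def IsProper (D : TGDiagram m) : Prop :=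
  Finite D.Crossing ∧ (∀ c, D.sign c = 1 ∨ D.sign c = -1) ∧
    (∀ c, D.symm (D.symm c) = c) ∧ (∀ c, D.symm c ≠ c) ∧
    (∀ c, D.sign (D.symm c) = D.sign c) ∧
    (∀ c, D.over' (D.symm c) = -D.over' c) ∧ (∀ c, D.under (D.symm c) = -D.under c)

theorem Wu_symm (D : TGDiagram m) (a b : ZMod m) : D.Wu a b = D.Wu b a := by
  have h : {c : D.Crossing |
      (D.over' c = a ∧ D.under c = b) ∨ (D.over' c = b ∧ D.under c = a)} =
      {c : D.Crossing |
      (D.over' c = b ∧ D.under c = a) ∨ (D.over' c = a ∧ D.under c = b)} := by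
    ext c; exact or_comm
  unfold Wu
  rw [h]

/-! Moves on trace-graph diagrams.  Each move is performed simultaneously on a small
disk `Δ` and on its image under the symmetry `τ ↦ τ + π`. -/

/-- A move inducing a bijection of crossings preserving signs and markings
(e.g. Reidemeister moves III and IV of Fig. 4, and the moves of Fig. 6 which do not
affect the crossings between traces). -/
structure Iso (D D' : TGDiagram m) : Type where
  e : D.Crossing ≃ D'.Crossing
  sign_eq : ∀ c, D'.sign (e c) = D.sign c
  over_eq : ∀ c, D'.over' (e c) = D.over' c
  under_eq : ∀ c, D'.under (e c) = D.under c

/-- A move creating (for each element of `P`) a pair of crossings between the same two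
traces, with the same markings and opposite signs (e.g. Reidemeister move II of Fig. 4
and the moves of Fig. 6 creating cancelling pairs of crossings). -/
structure PairCreation (D D' : TGDiagram m) : Type 1 where
  P : Type
  finP : Finite P
  e : D.Crossing ⊕ (P × Bool) ≃ D'.Crossing
  sign_eq : ∀ c, D'.sign (e (Sum.inl c)) = D.sign c
  over_eq : ∀ c, D'.over' (e (Sum.inl c)) = D.over' c
  under_eq : ∀ c, D'.under (e (Sum.inl c)) = D.under c
  new_sign : ∀ p : P, D'.sign (e (Sum.inr (p, true))) = -D'.sign (e (Sum.inr (p, false)))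
  new_over : ∀ p : P, D'.over' (e (Sum.inr (p, true))) = D'.over' (e (Sum.inr (p, false)))
  new_under : ∀ p : P, D'.under (e (Sum.inr (p, true))) = D'.under (e (Sum.inr (p, false)))

/-- Reidemeister move V of Fig. 4: creation of a crossing (and its symmetric copy)
involving a trace arc ending at a hanging vertex; such an arc is marked `[0]`. -/
structure AddZero (D D' : TGDiagram m) : Type where
  e : D.Crossing ⊕ Bool ≃ D'.Crossing
  sign_eq : ∀ c, D'.sign (e (Sum.inl c)) = D.sign c
  over_eq : ∀ c, D'.over' (e (Sum.inl c)) = D.over' c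
  under_eq : ∀ c, D'.under (e (Sum.inl c)) = D.under c
  new_zero : ∀ b : Bool, D'.over' (e (Sum.inr b)) = 0 ∨ D'.under (e (Sum.inr b)) = 0

/-- The tetrahedral move 6i (corresponding to a fiber quadrisecant): exactly 3 couples
of symmetric crossings are switched; at a switched crossing the overcrossing and
undercrossing traces are exchanged and the sign is reversed, all other crossings
are unaffected. -/
structure Tetra (D D' : TGDiagram m) : Type where
  e : D.Crossing ≃ D'.Crossing
  c1 : D.Crossing
  c2 : D.Crossing
  c3 : D.Crossing
  distinct :
    ({c1, c2, c3, D.symm c1, D.symm c2, D.symm c3} : Set D.Crossing).encard = 6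
  switch_sign : ∀ c ∈ ({c1, c2, c3, D.symm c1, D.symm c2, D.symm c3} : Set D.Crossing),
    D'.sign (e c) = -D.sign c
  switch_over : ∀ c ∈ ({c1, c2, c3, D.symm c1, D.symm c2, D.symm c3} : Set D.Crossing),
    D'.over' (e c) = D.under c
  switch_under : ∀ c ∈ ({c1, c2, c3, D.symm c1, D.symm c2, D.symm c3} : Set D.Crossing),
    D'.under (e c) = D.over' c
  keep_sign : ∀ c ∉ ({c1, c2, c3, D.symm c1, D.symm c2, D.symm c3} : Set D.Crossing),
    D'.sign (e c) = D.sign c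
  keep_over : ∀ c ∉ ({c1, c2, c3, D.symm c1, D.symm c2, D.symm c3} : Set D.Crossing),
    D'.over' (e c) = D.over' c
  keep_under : ∀ c ∉ ({c1, c2, c3, D.symm c1, D.symm c2, D.symm c3} : Set D.Crossing),
    D'.under (e c) = D.under c
  symm_comm : ∀ c, e (D.symm c) = D'.symm (e c)

/-- The moves 6vi and 6vii of Fig. 6: at one crossing (and at its symmetric copy) the
overcrossing arc becomes undercrossing and vice versa, while the sign of the crossing
is unchanged. -/
structure SwitchOne (D D' : TGDiagram m) : Type where
  e : D.Crossing ≃ D'.Crossing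
  c0 : D.Crossing
  sign_eq : ∀ c, D'.sign (e c) = D.sign c
  switch_over : ∀ c ∈ ({c0, D.symm c0} : Set D.Crossing), D'.over' (e c) = D.under c
  switch_under : ∀ c ∈ ({c0, D.symm c0} : Set D.Crossing), D'.under (e c) = D.over' c
  keep_over : ∀ c ∉ ({c0, D.symm c0} : Set D.Crossing), D'.over' (e c) = D.over' c
  keep_under : ∀ c ∉ ({c0, D.symm c0} : Set D.Crossing), D'.under (e c) = D.under c
  symm_comm : ∀ c, e (D.symm c) = D'.symm (e c)

/-- The moves 6ix and 6x of Fig. 6 (corresponding to fiber extreme secants), in the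
`add' direction: a self-crossing of a trace marked `[a]` (and its symmetric copy,
a self-crossing of the trace marked `[−a]`) is created. -/
structure AddSelf (D D' : TGDiagram m) (a : ZMod m) : Type where
  e : D.Crossing ⊕ Bool ≃ D'.Crossing
  sign_eq : ∀ c, D'.sign (e (Sum.inl c)) = D.sign c
  over_eq : ∀ c, D'.over' (e (Sum.inl c)) = D.over' c
  under_eq : ∀ c, D'.under (e (Sum.inl c)) = D.under c
  new_over_t : D'.over' (e (Sum.inr true)) = a
  new_under_t : D'.under (e (Sum.inr true)) = a
  new_over_f : D'.over' (e (Sum.inr false)) = -a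
  new_under_f : D'.under (e (Sum.inr false)) = -a
  new_symm : D'.symm (e (Sum.inr true)) = e (Sum.inr false)
  symm_comm : ∀ c, e (Sum.inl (D.symm c)) = D'.symm (e (Sum.inl c))

end TGDiagram

/-- A step of regular isotopy of trace graphs: one of the Reidemeister moves of
types II, III, IV, V of Fig. 4 (in either direction). -/
def RegularStep {m : ℕ} (D D' : TGDiagram m) : Prop :=
  Nonempty (TGDiagram.Iso D D') ∨
    Nonempty (TGDiagram.PairCreation D D') ∨ Nonempty (TGDiagram.PairCreation D' D) ∨
    Nonempty (TGDiagram.AddZero D D') ∨ Nonempty (TGDiagram.AddZero D' D)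

/-- A move of Fig. 6 (in either direction): the tetrahedral move 6i, the
over/under-switching moves 6vi and 6vii, the moves 6ix and 6x creating or deleting a
self-crossing of a trace, and the remaining moves (which affect the crossings between
traces only by creating or deleting cancelling pairs, or not at all). -/
def Fig6Step {m : ℕ} (D D' : TGDiagram m) : Prop :=
  Nonempty (TGDiagram.Tetra D D') ∨ Nonempty (TGDiagram.Tetra D' D) ∨
    Nonempty (TGDiagram.SwitchOne D D') ∨ Nonempty (TGDiagram.SwitchOne D' D) ∨
    (∃ a, Nonempty (TGDiagram.AddSelf D D' a) ∨ Nonempty (TGDiagram.AddSelf D' D a)) ∨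
    Nonempty (TGDiagram.PairCreation D D') ∨ Nonempty (TGDiagram.PairCreation D' D) ∨
    Nonempty (TGDiagram.Iso D D')

/-- One step in the transformation of trace graphs: a regular-isotopy move or a move
of Fig. 6, between proper (symmetric) diagrams. -/
def MoveStep {m : ℕ} (D D' : TGDiagram m) : Prop :=
  (D.IsProper ∧ D'.IsProper) ∧ (RegularStep D D' ∨ Fig6Step D D')

/-- Reversing both ordered pairs of a crossing: the `τ ↦ τ + π` symmetry. -/
def swapPairs (c : Pt × Pt × Pt × Pt) : Pt × Pt × Pt × Pt := (c.2.1, c.1, c.2.2.2, c.2.2.1)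

/-- The combinatorial trace-graph diagram of a knot `K`, with markings in `ℤ_m`. -/
def Knot.diagram (K : Knot) (m : ℕ) : TGDiagram m where
  Crossing := {c : Pt × Pt × Pt × Pt // c ∈ K.CrossingSet}
  sign c := K.crSign c.1
  over' c := K.mark m c.1.1 c.1.2.1
  under c := K.mark m c.1.2.2.1 c.1.2.2.2
  symm c :=
    @dite _ (swapPairs c.1 ∈ K.CrossingSet) (Classical.dec _)
      (fun h => ⟨swapPairs c.1, h⟩) (fun _ => c)

/-- `|W^u_{a,b}(K₀) − W^u_{a,b}(K₁)|` as a function of the unordered pair `{a,b}`. -/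
def wuDiff (K₀ K₁ : Knot) (M : ℕ) : Sym2 (ZMod M) → ℤ :=
  Sym2.lift ⟨fun a b => |(K₀.diagram M).Wu a b - (K₁.diagram M).Wu a b|,
    fun a b => by
      dsimp only
      rw [TGDiagram.Wu_symm (K₀.diagram M) a b, TGDiagram.Wu_symm (K₁.diagram M) a b]⟩

/-! Geometric traces of the trace graph. -/

/-- A trace of `TG(K)`: either a trace circle (a periodic family of fiber secants) or a
trace arc, whose endpoints are hanging vertices, i.e. degenerate pairs at fiber
tangency points of `K`. -/
structure TraceCurve (K : Knot) : Type where
  c : ℝ → Pt × Pt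
  cont : Continuous c
  circleOrArc :
    ((∀ s, K.SecPair (c s)) ∧ ∃ T > 0, ∀ s, c (s + T) = c s) ∨
      ((∀ s ∈ Set.Ioo (0 : ℝ) 1, K.SecPair (c s)) ∧ (c 0).1 = (c 0).2 ∧ (c 1).1 = (c 1).2 ∧
        K.IsFiberTangentPt (c 0).1 ∧ K.IsFiberTangentPt (c 1).1)

/-- The subset of the trace graph swept by a trace. -/
def TraceCurve.image {K : Knot} (tr : TraceCurve K) : Set Torus3 :=
  {x | ∃ s, K.SecPair (tr.c s) ∧ x = TGpt (tr.c s).1 (tr.c s).2}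

/-- The orientation rule of Definition 2.2 for a parametrized trace: the angle `τ`
strictly increases along the trace where the underlying crossing sign is `+1` and
strictly decreases where it is `−1`; the angular velocity of the secant direction
vanishes exactly at the tangent vertices. -/
def OrientedTrace {K : Knot} (tr : TraceCurve K) : Prop :=
  ∀ s, K.SecPair (tr.c s) →
    0 ≤ (K.crossSign (tr.c s).1 (tr.c s).2 : ℝ) *
        cross2 (secVecPair (tr.c s)) (deriv (fun u => secVecPair (tr.c u)) s) ∧
      (cross2 (secVecPair (tr.c s)) (deriv (fun u => secVecPair (tr.c u)) s) = 0 ↔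
        K.detPair (tr.c s) = 0)

/-! Plat and closed-braid positions. -/

/-- `p` lies in the open sector of fiber angles `(α, β)`. -/
def inSector (p : Pt) (α β : ℝ) : Prop :=
  ∃ φ ∈ Set.Ioo α β, yc p = rho p * Real.cos φ ∧ zc p = rho p * Real.sin φ

namespace Knot

variable (K : Knot)

/-- A crossing of the annular diagram of `K` (projection along `ρ`): two points of `K`
in a common fiber with the same coordinate along the axis, ordered by distance
from the axis. -/
def VerticalCrossing (pq : Pt × Pt) : Prop :=
  K.onK pq.1 ∧ K.onK pq.2 ∧ pq.1 ≠ pq.2 ∧ SameFiber pq.1 pq.2 ∧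
    xc pq.1 = xc pq.2 ∧ rho pq.1 < rho pq.2

/-- The index of the strand through `p`: the number of strands of `K` in the fiber of
`p` which are closer to the bottom (smaller coordinate along the axis). -/
def strandIndex (p : Pt) : ℕ := {r : Pt | K.onK r ∧ SameFiber r p ∧ xc r < xc p}.ncard

end Knot

/-- `K` is in plat position with respect to the word `w` in the generators
`σ₁^{±1}, …, σ_{2n}^{±1}` of the braid group `B_{2n+1}`: the circle of fiber angles is
divided into `l + 2n` sectors (`l = w.length`), each containing exactly one crossing
of the diagram (matching the corresponding letter of `w`) or exactly one fiber
tangency (local extremum). -/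
def PlatPresentation (K : Knot) (n : ℕ) (w : List (Fin (2 * n) × Bool)) : Prop :=
  ∃ θ : Fin (w.length + 2 * n + 1) → ℝ,
    StrictMono θ ∧ θ (Fin.last (w.length + 2 * n)) = θ 0 + 2 * π ∧
    (∀ j : Fin (w.length + 2 * n),
      if h : (j : ℕ) < w.length then
        (∃! pq : Pt × Pt, K.VerticalCrossing pq ∧ inSector pq.1 (θ j.castSucc) (θ j.succ)) ∧
        (∀ pq : Pt × Pt, K.VerticalCrossing pq → inSector pq.1 (θ j.castSucc) (θ j.succ) →
          K.strandIndex pq.1 = ((w.get ⟨(j : ℕ), h⟩).1 : ℕ) ∧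
            ((w.get ⟨(j : ℕ), h⟩).2 = true ↔ K.crossSign pq.1 pq.2 = 1)) ∧
        (∀ t ∈ Set.Ico (0 : ℝ) 1, K.Dang t = 0 →
          ¬inSector (K.map t) (θ j.castSucc) (θ j.succ))
      else
        (∃! t : ℝ, t ∈ Set.Ico (0 : ℝ) 1 ∧ K.Dang t = 0 ∧
          inSector (K.map t) (θ j.castSucc) (θ j.succ)) ∧
        (∀ pq : Pt × Pt, K.VerticalCrossing pq →
          ¬inSector pq.1 (θ j.castSucc) (θ j.succ))) ∧
    (∀ pq : Pt × Pt, K.VerticalCrossing pq →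
      ∃ j : Fin (w.length + 2 * n), inSector pq.1 (θ j.castSucc) (θ j.succ)) ∧
    (∀ t ∈ Set.Ico (0 : ℝ) 1, K.Dang t = 0 →
      ∃ j : Fin (w.length + 2 * n), inSector (K.map t) (θ j.castSucc) (θ j.succ))

/-- `K` is the closed braid on `ns` strands around the axis `L` determined by the braid
word `w` in the generators `σ₁^{±1}, …, σ_{ns−1}^{±1}`: `K` is transversal to all
fibers, meets every fiber in exactly `ns` points, and the circle of fiber angles is
divided into `w.length` sectors each containing exactly one crossing of the annular
diagram, matching the corresponding letter of `w`. -/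
def ClosedBraidPresentation (K : Knot) (ns : ℕ) (w : List (Fin (ns - 1) × Bool)) : Prop :=
  (∀ t, 0 < K.Dang t) ∧
    (∀ p : Pt, p ∉ axisL → {q : Pt | K.onK q ∧ SameFiber q p}.ncard = ns) ∧
    ∃ θ : Fin (w.length + 1) → ℝ,
      StrictMono θ ∧ θ (Fin.last w.length) = θ 0 + 2 * π ∧
      (∀ j : Fin w.length,
        (∃! pq : Pt × Pt, K.VerticalCrossing pq ∧ inSector pq.1 (θ j.castSucc) (θ j.succ)) ∧
        (∀ pq : Pt × Pt, K.VerticalCrossing pq → inSector pq.1 (θ j.castSucc) (θ j.succ) →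
          K.strandIndex pq.1 = ((w.get j).1 : ℕ) ∧
            ((w.get j).2 = true ↔ K.crossSign pq.1 pq.2 = 1))) ∧
      (∀ pq : Pt × Pt, K.VerticalCrossing pq →
        ∃ j : Fin w.length, inSector pq.1 (θ j.castSucc) (θ j.succ))

end FQS

/-!
The marking of a secant `(p, q)` is `1/2π` times the change of argument of the projection
`t ↦ yz (K t)` of the knot to the plane orthogonal to `L`, taken along `K` from `p` to `q`.
Since `f b = f a · exp (∫ₐᵇ f'/f)` for a nonvanishing `C¹` curve `f`, this is an integer as soon
as `f a` and `f b` lie on a common ray, i.e. `p` and `q` lie in a common fiber. Winding numbers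
are additive along `K`, and shifting an endpoint by a full period adds `lk(K, L) = m`, so
`mark(p₁, p₃) − mark(p₁, p₂) − mark(p₂, p₃) ∈ mℤ`.
-/

section

open Complex

theorem ContDiff.continuous_logDeriv {𝕜 𝕜' : Type*} [NontriviallyNormedField 𝕜]
    [NontriviallyNormedField 𝕜'] [NormedAlgebra 𝕜 𝕜'] {f : 𝕜 → 𝕜'} (hf : ContDiff 𝕜 1 f)
    (hf0 : ∀ t, f t ≠ 0) : Continuous (logDeriv f) :=
  (hf.continuous_deriv le_rfl).div hf.continuous hf0

theorem Function.Periodic.logDeriv {𝕜 𝕜' : Type*} [NontriviallyNormedField 𝕜]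
    [NontriviallyNormedField 𝕜'] [NormedAlgebra 𝕜 𝕜'] {f : 𝕜 → 𝕜'} {c : 𝕜}
    (hf : Function.Periodic f c) : Function.Periodic (_root_.logDeriv f) c := fun t => by
  have hderiv : deriv f (t + c) = deriv f t := by
    rw [← deriv_comp_add_const]
    exact congrArg (deriv · t) (funext hf)
  rw [logDeriv_apply, logDeriv_apply, hderiv, hf t]

theorem exists_int_im_eq_of_exp_eq_ofReal {z : ℂ} {r : ℝ} (hr : 0 < r) (h : Complex.exp z = r) :
    ∃ k : ℤ, z.im = 2 * π * k := by
  have him := congrArg Complex.im h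
  have hre := congrArg Complex.re h
  rw [exp_im, ofReal_im] at him
  rw [exp_re, ofReal_re] at hre
  have hsin : Real.sin z.im = 0 := (mul_eq_zero.mp him).resolve_left (Real.exp_pos _).ne'
  have hcos : 0 < Real.cos z.im := pos_of_mul_pos_right (hre ▸ hr) (Real.exp_pos _).le
  obtain ⟨k, hk⟩ := (Real.cos_eq_one_iff _).mp <|
    (Real.sin_eq_zero_iff_cos_eq.mp hsin).resolve_right (by linarith)
  exact ⟨k, by rw [← hk]; ring⟩

theorem eq_mul_exp_integral_logDeriv {f : ℝ → ℂ} (hf : ContDiff ℝ 1 f) (hf0 : ∀ t, f t ≠ 0)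
    (a b : ℝ) : f b = f a * Complex.exp (∫ t in a..b, logDeriv f t) := by
  have hcont := hf.continuous_logDeriv hf0
  set F : ℝ → ℂ := fun x => ∫ t in a..x, logDeriv f t
  have hF : ∀ x, HasDerivAt F (logDeriv f x) x := fun x =>
    intervalIntegral.integral_hasDerivAt_right (hcont.intervalIntegrable a x)
      (hcont.stronglyMeasurableAtFilter _ _) hcont.continuousAt
  have hconst : ∀ x, HasDerivAt (fun x => f x * Complex.exp (-F x)) 0 x := by
    intro x
    refine (((hf.differentiable one_ne_zero x).hasDerivAt).mul (hF x).neg.cexp).congr_deriv ?_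
    rw [logDeriv_apply]
    field_simp [hf0 x]
    ring
  have hba := is_const_of_deriv_eq_zero (fun x => (hconst x).differentiableAt)
    (fun x => (hconst x).deriv) b a
  simp only [F, intervalIntegral.integral_same, neg_zero, Complex.exp_zero, mul_one] at hba
  rw [← hba, mul_assoc, ← Complex.exp_add, neg_add_cancel, Complex.exp_zero, mul_one]

theorem exists_int_integral_logDeriv_im_eq {f : ℝ → ℂ} (hf : ContDiff ℝ 1 f)
    (hf0 : ∀ t, f t ≠ 0) {a b : ℝ} (hab : SameRay ℝ (f a) (f b)) :
    ∃ k : ℤ, (∫ t in a..b, logDeriv f t).im = 2 * π * k := by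
  obtain ⟨r₁, r₂, hr₁, hr₂, h⟩ := hab.exists_pos (hf0 a) (hf0 b)
  refine exists_int_im_eq_of_exp_eq_ofReal (div_pos hr₁ hr₂) ?_
  rw [real_smul, real_smul, eq_mul_exp_integral_logDeriv hf hf0 a b] at h
  rw [ofReal_div, eq_div_iff (ofReal_ne_zero.mpr hr₂.ne')]
  refine mul_right_cancel₀ (hf0 a) ?_
  linear_combination -h

end

namespace FQS

/-- Projection to the plane orthogonal to `L`, identified with `ℂ`; the fibers of `φ` are the
open rays from `0`. -/
def yz (p : Pt) : ℂ := yc p + zc p * Complex.I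

lemma yz_re (p : Pt) : (yz p).re = yc p := by simp [yz]

lemma yz_im (p : Pt) : (yz p).im = zc p := by simp [yz]

lemma normSq_yz (p : Pt) : Complex.normSq (yz p) = yc p ^ 2 + zc p ^ 2 := by
  rw [Complex.normSq_apply, yz_re, yz_im]; ring

lemma yz_ne_zero {p : Pt} (hp : p ∉ axisL) : yz p ≠ 0 := fun h =>
  hp ⟨by rw [← yz_re, h, Complex.zero_re], by rw [← yz_im, h, Complex.zero_im]⟩

lemma SameFiber.sameRay_yz {p q : Pt} (h : SameFiber p q) : SameRay ℝ (yz p) (yz q) := by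
  obtain ⟨hp, -, hc, hd⟩ := h
  have hn : 0 < yc p ^ 2 + zc p ^ 2 := normSq_yz p ▸ Complex.normSq_pos.mpr (yz_ne_zero hp)
  have hq : yz q = ((yc p * yc q + zc p * zc q) / (yc p ^ 2 + zc p ^ 2)) • yz p := by
    apply Complex.ext
    · rw [Complex.smul_re, yz_re, yz_re, smul_eq_mul]
      field_simp
      linear_combination (-zc p) * hc
    · rw [Complex.smul_im, yz_im, yz_im, smul_eq_mul]
      field_simp
      linear_combination yc p * hc
  rw [hq]
  exact SameRay.sameRay_nonneg_smul_right _ (by positivity)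

namespace Knot

variable (K : Knot)

def yzCurve (t : ℝ) : ℂ := yz (K.map t)

lemma contDiff_map : ContDiff ℝ 1 K.map := K.isKnot.1.of_le (by exact_mod_cast le_top)

lemma contDiff_yzCurve : ContDiff ℝ 1 K.yzCurve :=
  (Complex.ofRealCLM.contDiff.comp ((contDiff_fst.comp contDiff_snd).comp K.contDiff_map)).add
    ((Complex.ofRealCLM.contDiff.comp ((contDiff_snd.comp contDiff_snd).comp K.contDiff_map)).mul
      contDiff_const)

lemma yzCurve_ne_zero (t : ℝ) : K.yzCurve t ≠ 0 := yz_ne_zero (K.isKnot.2.2.2.2 t)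

lemma map_periodic : Function.Periodic K.map 1 := K.isKnot.2.1

lemma yzCurve_periodic : Function.Periodic K.yzCurve 1 := fun t => by
  rw [yzCurve, yzCurve, K.map_periodic t]

lemma hasDerivAt_yzCurve (t : ℝ) :
    HasDerivAt K.yzCurve
      (deriv (fun s => yc (K.map s)) t + deriv (fun s => zc (K.map s)) t * Complex.I) t := by
  have hy : DifferentiableAt ℝ (fun s => yc (K.map s)) t :=
    ((contDiff_fst.comp contDiff_snd).comp K.contDiff_map).differentiable one_ne_zero t
  have hz : DifferentiableAt ℝ (fun s => zc (K.map s)) t :=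
    ((contDiff_snd.comp contDiff_snd).comp K.contDiff_map).differentiable one_ne_zero t
  exact hy.hasDerivAt.ofReal_comp.add (hz.hasDerivAt.ofReal_comp.mul_const Complex.I)

lemma dang_div_r_sq (t : ℝ) : K.Dang t / K.r t ^ 2 = (logDeriv K.yzCurve t).im := by
  rw [logDeriv_apply, (K.hasDerivAt_yzCurve t).deriv, Complex.div_im, yzCurve, normSq_yz,
    yz_re, yz_im, r, rho, Real.sq_sqrt (by positivity), Dang, rawDang]
  simp only [Complex.add_re, Complex.add_im, Complex.ofReal_re, Complex.ofReal_im,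
    Complex.mul_re, Complex.mul_im, Complex.I_re, Complex.I_im]
  ring

lemma wind_eq_integral_logDeriv_im (a b : ℝ) :
    K.wind a b = (1 / (2 * π)) * ∫ t in a..b, (logDeriv K.yzCurve t).im := by
  simp only [wind, dang_div_r_sq]

lemma continuous_logDeriv_yzCurve_im : Continuous fun t => (logDeriv K.yzCurve t).im :=
  Complex.continuous_im.comp (K.contDiff_yzCurve.continuous_logDeriv K.yzCurve_ne_zero)

lemma wind_add (a b c : ℝ) : K.wind a b + K.wind b c = K.wind a c := by
  simp only [wind_eq_integral_logDeriv_im, ← mul_add]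
  rw [intervalIntegral.integral_add_adjacent_intervals
    (K.continuous_logDeriv_yzCurve_im.intervalIntegrable a b)
    (K.continuous_logDeriv_yzCurve_im.intervalIntegrable b c)]

lemma wind_add_intCast (t : ℝ) (n : ℤ) : K.wind t (t + n) = n * K.wind 0 1 := by
  have hper : Function.Periodic (fun t => (logDeriv K.yzCurve t).im) 1 := fun t => by
    simp only [K.yzCurve_periodic.logDeriv t]
  have h := hper.intervalIntegral_add_zsmul_eq n t
    (K.continuous_logDeriv_yzCurve_im.intervalIntegrable)
  rw [zsmul_one, zsmul_eq_mul, hper.intervalIntegral_add_eq t 0, zero_add] at h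
  simp only [wind_eq_integral_logDeriv_im, h]
  ring

lemma exists_int_wind_eq {a b : ℝ} (hab : SameRay ℝ (K.yzCurve a) (K.yzCurve b)) :
    ∃ k : ℤ, K.wind a b = k := by
  obtain ⟨k, hk⟩ := exists_int_integral_logDeriv_im_eq K.contDiff_yzCurve K.yzCurve_ne_zero hab
  refine ⟨k, ?_⟩
  have hint := (K.contDiff_yzCurve.continuous_logDeriv K.yzCurve_ne_zero).intervalIntegrable
    (μ := MeasureTheory.volume) a b
  have him := intervalIntegral.intervalIntegral_im (𝕜 := ℂ) hint
  simp only [RCLike.im_to_complex] at him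
  rw [wind_eq_integral_logDeriv_im, him, hk]
  field_simp

lemma wind_zero_one : K.wind 0 1 = K.lkL := by
  have h01 : SameRay ℝ (K.yzCurve 0) (K.yzCurve 1) := by
    rw [← zero_add 1, K.yzCurve_periodic 0]
  obtain ⟨k, hk⟩ := K.exists_int_wind_eq h01
  rw [lkL, hk, round_intCast]

lemma map_param {p : Pt} (hp : K.onK p) : K.map (K.param p) = p := by
  obtain ⟨t, rfl⟩ := hp
  have hex : ∃ s ∈ Set.Ico (0 : ℝ) 1, K.map s = K.map t :=
    ⟨Int.fract t, ⟨Int.fract_nonneg t, Int.fract_lt_one t⟩, by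
      rw [Int.fract, ← mul_one (⌊t⌋ : ℝ)]; exact K.map_periodic.sub_int_mul_eq ⌊t⌋⟩
  rw [param, dif_pos hex]
  exact hex.choose_spec.2

lemma exists_param2_snd_eq (p q : Pt) : ∃ n : ℤ, (K.param2 p q).2 = K.param q + n := by
  unfold param2
  split_ifs
  · exact ⟨1, by simp⟩
  · exact ⟨0, by simp⟩

lemma exists_markInt_eq_wind_add {p q : Pt} (hp : K.onK p) (hq : K.onK q)
    (hpq : SameRay ℝ (yz p) (yz q)) :
    ∃ n : ℤ, (K.markInt p q : ℝ) = K.wind (K.param p) (K.param q) + n * K.lkL := by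
  obtain ⟨n, hn⟩ := K.exists_param2_snd_eq p q
  have hq' : K.yzCurve (K.param2 p q).2 = yz q := by
    rw [hn, ← mul_one (n : ℝ), K.yzCurve_periodic.int_mul n, yzCurve, K.map_param hq]
  obtain ⟨k, hk⟩ := K.exists_int_wind_eq (a := (K.param2 p q).1) (b := (K.param2 p q).2)
    (by rwa [hq', yzCurve, param2, K.map_param hp])
  refine ⟨n, ?_⟩
  rw [markInt, hk, round_intCast, ← hk, hn, ← K.wind_add _ (K.param q), K.wind_add_intCast,
    wind_zero_one]
  rfl

lemma exists_markInt_eq_add {p₁ p₂ p₃ : Pt} (h1 : K.onK p₁) (h2 : K.onK p₂) (h3 : K.onK p₃)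
    (h12 : SameRay ℝ (yz p₁) (yz p₂)) (h23 : SameRay ℝ (yz p₂) (yz p₃)) :
    ∃ n : ℤ, K.markInt p₁ p₃ = K.markInt p₁ p₂ + K.markInt p₂ p₃ + n * K.lkL := by
  have hp₂ : yz p₂ ≠ 0 := by
    obtain ⟨t, rfl⟩ := h2
    exact K.yzCurve_ne_zero t
  obtain ⟨n₁₂, hn₁₂⟩ := K.exists_markInt_eq_wind_add h1 h2 h12
  obtain ⟨n₂₃, hn₂₃⟩ := K.exists_markInt_eq_wind_add h2 h3 h23
  obtain ⟨n₁₃, hn₁₃⟩ := K.exists_markInt_eq_wind_add h1 h3 (h12.trans h23 (absurd · hp₂))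
  refine ⟨n₁₃ - n₁₂ - n₂₃, ?_⟩
  have hadd := K.wind_add (K.param p₁) (K.param p₂) (K.param p₃)
  have hreal : (K.markInt p₁ p₃ : ℝ) =
      K.markInt p₁ p₂ + K.markInt p₂ p₃ + ((n₁₃ - n₁₂ - n₂₃ : ℤ) : ℝ) * K.lkL := by
    push_cast
    linear_combination hn₁₃ - hn₁₂ - hn₂₃ - hadd
  exact_mod_cast hreal

end Knot

theorem statement18_general (K : Knot) (m : ℤ) (hlk : K.lkL = m)
    (p₁ p₂ p₃ : Pt) (h1 : K.onK p₁) (h2 : K.onK p₂) (h3 : K.onK p₃)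
    (hf12 : SameFiber p₁ p₂) (hf23 : SameFiber p₂ p₃) :
    K.mark m.natAbs p₁ p₃ = K.mark m.natAbs p₁ p₂ + K.mark m.natAbs p₂ p₃ := by
  obtain ⟨n, hn⟩ := K.exists_markInt_eq_add h1 h2 h3 hf12.sameRay_yz hf23.sameRay_yz
  have hm : (m : ZMod m.natAbs) = 0 :=
    (ZMod.intCast_zmod_eq_zero_iff_dvd _ _).mpr (Int.natAbs_dvd.mpr dvd_rfl)
  simp only [Knot.mark, hn, hlk, Int.cast_add, Int.cast_mul, hm, mul_zero, add_zero]

/-- If three traces of the trace graph of a knot `K ⊂ ℝ³ − L` with `lk(K,L) = m`, marked by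
`[a], [b], [c] ∈ ℤ_{|m|}`, meet at a triple vertex (corresponding to a fiber trisecant
of `K` through points `p₁, p₂, p₃` with `p₂` between `p₁` and `p₃`), and `[b]` is the
marking of the middle trace (the crossing formed by the two outer strands, i.e. the
ordered pair `(p₁, p₃)`), then `b = a + c (mod |m|)`, where `[a] = [mark(p₁,p₂)]` and
`[c] = [mark(p₂,p₃)]` are the markings of the other two traces. -/
theorem statement18 (K : Knot) (m : ℤ) (hlk : K.lkL = m)
    (p₁ p₂ p₃ : Pt) (h1 : K.onK p₁) (h2 : K.onK p₂) (h3 : K.onK p₃)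
    (h12 : p₁ ≠ p₂) (h23 : p₂ ≠ p₃) (h13 : p₁ ≠ p₃)
    (hf12 : SameFiber p₁ p₂) (hf23 : SameFiber p₂ p₃)
    (hmid : ∃ s : ℝ, 0 < s ∧ s < 1 ∧ p₂ = p₁ + s • (p₃ - p₁)) :
    K.mark m.natAbs p₁ p₃ = K.mark m.natAbs p₁ p₂ + K.mark m.natAbs p₂ p₃ :=
  statement18_general K m hlk p₁ p₂ p₃ h1 h2 h3 hf12 hf23

end FQS
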